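/- Let b > 0 and let X have the Maxwell distribution with density f(x) = 4 b^{−3} π^{−1/2} x² exp{−x²/b²} on (0,∞). Then for every t > 0, E(X | X > t) = (t² + b²) b² r(t) / (2t²). -/

import Mathlib

/-!
The integrand `x f(x)` of the truncated first moment is, up to the constant
`4 b⁻³ π^(-1/2)`, equal to `x³ exp(-x²/b²)`, which has the elementary primitive
`-(b²/2) (x² + b²) exp(-x²/b²)`. Hence `∫_t^∞ x f(x) dx = (b²/2)(t² + b²) f(t) / t²`,
and dividing by `F̄(t)` turns `f(t) / F̄(t)` into `r(t)`.
-/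

open MeasureTheory Filter Topology

theorem hasDerivAt_sq_add_mul_exp_neg_sq_div {b : ℝ} (hb : b ≠ 0) (x : ℝ) :
    HasDerivAt (fun x => -(b ^ 2 / 2) * ((x ^ 2 + b ^ 2) * Real.exp (-(x ^ 2) / b ^ 2)))
      (x ^ 3 * Real.exp (-(x ^ 2) / b ^ 2)) x := by
  have hexp : HasDerivAt (fun x : ℝ => Real.exp (-(x ^ 2) / b ^ 2))
      (Real.exp (-(x ^ 2) / b ^ 2) * (-(2 * x) / b ^ 2)) x := by
    simpa using (((hasDerivAt_pow 2 x).neg).div_const (b ^ 2)).exp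
  have hpoly : HasDerivAt (fun x : ℝ => x ^ 2 + b ^ 2) (2 * x) x := by
    simpa using (hasDerivAt_pow 2 x).add_const (b ^ 2)
  refine ((hpoly.mul hexp).const_mul (-(b ^ 2 / 2))).congr_deriv ?_
  field_simp
  ring

theorem tendsto_sq_add_mul_exp_neg_sq_div_atTop {b : ℝ} (hb : b ≠ 0) :
    Tendsto (fun x : ℝ => (x ^ 2 + b ^ 2) * Real.exp (-(x ^ 2) / b ^ 2)) atTop (𝓝 0) := by
  have hu : Tendsto (fun x : ℝ => x ^ 2 / b ^ 2) atTop atTop :=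
    (tendsto_pow_atTop two_ne_zero).atTop_div_const (by positivity)
  have hlim : Tendsto (fun u : ℝ => b ^ 2 * (u * Real.exp (-u) + Real.exp (-u))) atTop (𝓝 0) := by
    simpa using ((Real.tendsto_pow_mul_exp_neg_atTop_nhds_zero 1).add
      Real.tendsto_exp_neg_atTop_nhds_zero).const_mul (b ^ 2)
  refine (hlim.comp hu).congr fun x => ?_
  simp only [Function.comp_apply, neg_div]
  field_simp

theorem integral_Ioi_pow_three_mul_exp_neg_sq_div {b t : ℝ} (hb : b ≠ 0) (ht : 0 ≤ t) :
    ∫ x in Set.Ioi t, x ^ 3 * Real.exp (-(x ^ 2) / b ^ 2)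
      = b ^ 2 / 2 * ((t ^ 2 + b ^ 2) * Real.exp (-(t ^ 2) / b ^ 2)) := by
  have hnonneg : ∀ x ∈ Set.Ioi t, 0 ≤ x ^ 3 * Real.exp (-(x ^ 2) / b ^ 2) := fun x hx =>
    mul_nonneg (pow_nonneg (ht.trans hx.le) 3) (Real.exp_pos _).le
  rw [integral_Ioi_of_hasDerivAt_of_nonneg
    (hasDerivAt_sq_add_mul_exp_neg_sq_div hb t).continuousAt.continuousWithinAt
    (fun x _ => hasDerivAt_sq_add_mul_exp_neg_sq_div hb x) hnonneg
    (by simpa using (tendsto_sq_add_mul_exp_neg_sq_div_atTop hb).const_mul (-(b ^ 2 / 2)))]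
  ring

theorem conditional_mean_of_maxwell_distribution
    (b : ℝ) (hb : 0 < b)
    (f : ℝ → ℝ)
    (hf : ∀ x, 0 < x →
      f x = 4 / (b ^ 3 * Real.sqrt Real.pi) * x ^ 2 * Real.exp (-(x ^ 2) / b ^ 2))
    (Fbar : ℝ → ℝ)
    (r : ℝ → ℝ) (hr : ∀ t, r t = f t / Fbar t)
    (t : ℝ) (ht : 0 < t) :
    (∫ x in Set.Ioi t, x * f x) / Fbar t = (t ^ 2 + b ^ 2) * b ^ 2 * r t / (2 * t ^ 2) := by
  set c := 4 / (b ^ 3 * Real.sqrt Real.pi)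
  have hintegrand : Set.EqOn (fun x => x * f x)
      (fun x => c * (x ^ 3 * Real.exp (-(x ^ 2) / b ^ 2))) (Set.Ioi t) := fun x hx => by
    simp only [hf x (ht.trans hx)]
    ring
  rw [setIntegral_congr_fun measurableSet_Ioi hintegrand, integral_const_mul,
    integral_Ioi_pow_three_mul_exp_neg_sq_div hb.ne' ht.le, hr, hf t ht]
  field_simp
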